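/- Let T be a G-tree and let g, h ∈ G be hyperbolic elements such that C_g ∩ C_h is nonempty, bounded, contains at least two points, and ℓ_T(gh) > ℓ_T(gh⁻¹) (i.e. the axes of g and h intersect in an arc of finite positive length and the induced orientations agree). Then there exist positive integers A and B such that for all integers a ≥ A and b ≥ B, the pair (g^a, h^b) is a good pair for ℓ_T. -/

import Mathlib

/-- A real tree: a nonempty complete geodesic 0-hyperbolic metric space. -/
def IsRealTree (T : Type*) [MetricSpace T] : Prop :=
  Nonempty T ∧ CompleteSpace T ∧
  (∀ x y : T, ∃ f : ℝ → T, f 0 = x ∧ f (dist x y) = y ∧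
    ∀ s ∈ Set.Icc (0 : ℝ) (dist x y), ∀ t ∈ Set.Icc (0 : ℝ) (dist x y),
      dist (f s) (f t) = |s - t|) ∧
  (∀ x y z w : T, dist x y + dist z w ≤
    max (dist x z + dist y w) (dist x w + dist y z))

/-- `σ : T → G → T` is a right action of `G` on `T` by isometries. -/
def IsIsomRightAction {G : Type*} [Group G] {T : Type*} [MetricSpace T]
    (σ : T → G → T) : Prop :=
  (∀ p : T, σ p 1 = p) ∧
  (∀ (p : T) (g h : G), σ p (g * h) = σ (σ p g) h) ∧
  (∀ g : G, Isometry (fun p : T => σ p g))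

/-- The translation length function of the action `σ`: `ℓ(g) = inf_p d(p, p·g)`. -/
noncomputable def transLen {G : Type*} [Group G] {T : Type*} [MetricSpace T]
    (σ : T → G → T) (g : G) : ℝ :=
  ⨅ p : T, dist p (σ p g)

/-- The characteristic set `C_g = {p : d(p, p·g) = ℓ(g)}` of `g`. -/
def charSet {G : Type*} [Group G] {T : Type*} [MetricSpace T]
    (σ : T → G → T) (g : G) : Set T :=
  {p : T | dist p (σ p g) = transLen σ g}

/-- The segment `[p,q] = {z : d(p,z) + d(z,q) = d(p,q)}`. -/
def treeSegment {T : Type*} [MetricSpace T] (p q : T) : Set T :=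
  {z : T | dist p z + dist z q = dist p q}

/-- `(x,y)` is a good pair for `ℓ` if `0 < ℓ(x)+ℓ(y)−ℓ(xy⁻¹) < 2·min{ℓ(x),ℓ(y)}`. -/
def GoodPair {G : Type*} [Group G] (ℓ : G → ℝ) (g h : G) : Prop :=
  0 < ℓ g + ℓ h - ℓ (g * h⁻¹) ∧
  ℓ g + ℓ h - ℓ (g * h⁻¹) < 2 * min (ℓ g) (ℓ h)

/-!
In a real tree the characteristic set of a hyperbolic `g` is a line on which `g` translates by
`ℓ(g)`, and `ℓ(k) ≥ d(p, pk²) - d(p, pk)` at every point `p`. Given `u, v` and a point `P` of both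
axes, let `Δ` and `e` be the Gromov products at `P` of `Pu, Pv` and of `Pu⁻¹, Pv⁻¹`: the lengths
along which the two axes leave `P` together, forwards and backwards. If `Δ + e < ℓ(u), ℓ(v)`,
the isosceles property of Gromov products and that lower bound give
`ℓ(u) + ℓ(v) - 2Δ - 2e ≤ ℓ(uv⁻¹) ≤ ℓ(u) + ℓ(v) - 2Δ`.

Apply this to `u = gᵃ`, `v = hᵇ`. The orientations of the two axes agree on `C_g ∩ C_h`, since
otherwise `Δ = e = 0` for `u = g`, `v = h`, whence `ℓ(gh⁻¹) = ℓ(g) + ℓ(h) ≥ ℓ(gh)`. So taking for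
`P` the rear one of two distinct points of `C_g ∩ C_h` makes `Δ` positive, while `Δ + e` never
exceeds the diameter of `C_g ∩ C_h`; hence `ℓ(gᵃ) + ℓ(hᵇ) - ℓ(gᵃh⁻ᵇ) ∈ [2Δ, 2Δ + 2e]` lies
strictly between `0` and `2 min(ℓ(gᵃ), ℓ(hᵇ)) = 2 min(a ℓ(g), b ℓ(h))` once `a, b` are large.
-/

def IsZeroHyperbolic (T : Type*) [MetricSpace T] : Prop :=
  ∀ x y z w : T, dist x y + dist z w ≤ max (dist x z + dist y w) (dist x w + dist y z)

noncomputable def gromovProduct {T : Type*} [MetricSpace T] (x a b : T) : ℝ :=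
  (dist x a + dist x b - dist a b) / 2

theorem abs_sub_lt_abs_add_abs_iff {a b : ℝ} : |a - b| < |a| + |b| ↔ 0 < a * b := by
  constructor <;> intro h <;>
  rcases abs_cases a with ⟨ha, _⟩ | ⟨ha, _⟩ <;> rcases abs_cases b with ⟨hb, _⟩ | ⟨hb, _⟩ <;>
  rcases abs_cases (a - b) with ⟨hab, _⟩ | ⟨hab, _⟩ <;> nlinarith

section MetricTree

variable {T : Type*} [MetricSpace T]

theorem IsRealTree.isZeroHyperbolic (hT : IsRealTree T) : IsZeroHyperbolic T := hT.2.2.2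

theorem IsRealTree.exists_mem_treeSegment (hT : IsRealTree T) (x y : T) {r : ℝ}
    (hr₀ : 0 ≤ r) (hr : r ≤ dist x y) : ∃ z ∈ treeSegment x y, dist x z = r := by
  obtain ⟨f, hf0, hfd, hf⟩ := hT.2.2.1 x y
  have hxz := hf 0 ⟨le_rfl, dist_nonneg⟩ r ⟨hr₀, hr⟩
  have hzy := hf r ⟨hr₀, hr⟩ (dist x y) ⟨dist_nonneg, le_rfl⟩
  rw [hf0, zero_sub, abs_neg, abs_of_nonneg hr₀] at hxz
  rw [hfd, abs_of_nonpos (by linarith)] at hzy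
  refine ⟨f r, ?_, hxz⟩
  change dist x (f r) + dist (f r) y = dist x y
  rw [hxz, hzy]
  ring

theorem mem_treeSegment_comm {x y z : T} : z ∈ treeSegment x y ↔ z ∈ treeSegment y x := by
  simp only [treeSegment, Set.mem_ofPred_eq, dist_comm x z, dist_comm z y, dist_comm x y, add_comm]

theorem dist_eq_add_of_mem_treeSegment {a b p m m' : T} (hp : p ∈ treeSegment a b)
    (hm : m ∈ treeSegment p a) (hm' : m' ∈ treeSegment p b) :
    dist m m' = dist m p + dist p m' := by
  have h4 := dist_triangle4 a m m' b
  have h1 : dist a p + dist p b = dist a b := hp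
  have h2 : dist p m + dist m a = dist p a := hm
  have h3 : dist p m' + dist m' b = dist p b := hm'
  refine le_antisymm (dist_triangle m p m') ?_
  linarith [dist_comm a p, dist_comm a m, dist_comm m p]

theorem gromovProduct_comm (x a b : T) : gromovProduct x a b = gromovProduct x b a := by
  rw [gromovProduct, gromovProduct, add_comm (dist x a), dist_comm a b]

theorem gromovProduct_nonneg (x a b : T) : 0 ≤ gromovProduct x a b := by
  rw [gromovProduct]
  linarith [dist_triangle a x b, dist_comm a x]

theorem gromovProduct_le_dist_left (x a b : T) : gromovProduct x a b ≤ dist x a := by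
  rw [gromovProduct]
  linarith [dist_triangle x a b]

theorem gromovProduct_le_dist_right (x a b : T) : gromovProduct x a b ≤ dist x b :=
  gromovProduct_comm x a b ▸ gromovProduct_le_dist_left x b a

theorem gromovProduct_eq_dist_of_mem_treeSegment {x a w : T} (h : w ∈ treeSegment x a) :
    gromovProduct x a w = dist x w := by
  have h' : dist x w + dist w a = dist x a := h
  rw [gromovProduct, dist_comm a w]
  linarith

namespace IsZeroHyperbolic

theorem min_gromovProduct_le (hT : IsZeroHyperbolic T) (x a b c : T) :
    min (gromovProduct x a b) (gromovProduct x b c) ≤ gromovProduct x a c := by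
  simp only [gromovProduct]
  have := dist_comm b x
  rcases le_max_iff.mp (hT a c b x) with h | h
  · exact min_le_of_left_le (by linarith [dist_comm c x])
  · exact min_le_of_right_le (by linarith [dist_comm a x, dist_comm c b])

theorem gromovProduct_le_of_lt (hT : IsZeroHyperbolic T) {x a b c : T}
    (h : gromovProduct x a c < gromovProduct x b c) :
    gromovProduct x a b ≤ gromovProduct x a c := by
  rcases min_le_iff.mp (hT.min_gromovProduct_le x a b c) with h' | h'
  · exact h'
  · exact absurd h' (not_le.mpr h)

theorem le_gromovProduct_of_mem_treeSegment (hT : IsZeroHyperbolic T) {x a b w : T}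
    (ha : w ∈ treeSegment x a) (hb : w ∈ treeSegment x b) : dist x w ≤ gromovProduct x a b := by
  have := hT.min_gromovProduct_le x a w b
  rwa [gromovProduct_eq_dist_of_mem_treeSegment ha, gromovProduct_comm x w b,
    gromovProduct_eq_dist_of_mem_treeSegment hb, min_self] at this

theorem dist_eq_abs_sub_of_mem_treeSegment (hT : IsZeroHyperbolic T) {a b z w : T}
    (hz : z ∈ treeSegment a b) (hw : w ∈ treeSegment a b) :
    dist z w = |dist a z - dist a w| := by
  have hmin : gromovProduct a z w = min (dist a z) (dist a w) := by
    refine le_antisymm (le_min (gromovProduct_le_dist_left a z w)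
      (gromovProduct_le_dist_right a z w)) ?_
    have := hT.min_gromovProduct_le a z b w
    rwa [gromovProduct_comm a z b, gromovProduct_eq_dist_of_mem_treeSegment hz,
      gromovProduct_eq_dist_of_mem_treeSegment hw] at this
  rw [gromovProduct] at hmin
  rw [← max_sub_min_eq_abs']
  linarith [min_add_max (dist a z) (dist a w)]

theorem eq_of_mem_treeSegment_of_dist_eq (hT : IsZeroHyperbolic T) {a b c z w : T}
    (hz : z ∈ treeSegment a b) (hw : w ∈ treeSegment a c) (hd : dist a z = dist a w)
    (hle : dist a z ≤ gromovProduct a b c) : z = w := by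
  have hzc : dist a z ≤ gromovProduct a z c := by
    have := hT.min_gromovProduct_le a z b c
    rw [gromovProduct_comm a z b, gromovProduct_eq_dist_of_mem_treeSegment hz] at this
    exact (le_min le_rfl hle).trans this
  have hzw : dist a z ≤ gromovProduct a z w := by
    have := hT.min_gromovProduct_le a z c w
    rw [gromovProduct_eq_dist_of_mem_treeSegment hw, ← hd] at this
    exact (le_min hzc le_rfl).trans this
  rw [gromovProduct] at hzw
  exact dist_le_zero.mp (by linarith)

theorem gromovProduct_eq_zero_of_pos_iff (hT : IsZeroHyperbolic T) {x a b z : T} {s : ℝ}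
    (hs : s ≠ 0) (ha : 0 < gromovProduct x a z ↔ 0 < s) (hb : 0 < gromovProduct x b z ↔ s < 0) :
    gromovProduct x a b = 0 := by
  refine le_antisymm ?_ (gromovProduct_nonneg x a b)
  rcases hs.lt_or_gt with hneg | hpos
  · have ha0 : gromovProduct x a z ≤ 0 := not_lt.mp (mt ha.mp (lt_asymm hneg))
    exact (hT.gromovProduct_le_of_lt (ha0.trans_lt (hb.mpr hneg))).trans ha0
  · have hb0 : gromovProduct x b z ≤ 0 := not_lt.mp (mt hb.mp (lt_asymm hpos))
    rw [gromovProduct_comm]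
    exact (hT.gromovProduct_le_of_lt (hb0.trans_lt (ha.mpr hpos))).trans hb0

end IsZeroHyperbolic

theorem IsRealTree.exists_mem_treeSegment_inter (hT : IsRealTree T) (a b c : T) :
    ∃ z ∈ treeSegment a b ∩ treeSegment a c, dist a z = gromovProduct a b c := by
  obtain ⟨z, hz, hdz⟩ := hT.exists_mem_treeSegment a b (gromovProduct_nonneg a b c)
    (gromovProduct_le_dist_left a b c)
  obtain ⟨w, hw, hdw⟩ := hT.exists_mem_treeSegment a c (gromovProduct_nonneg a b c)
    (gromovProduct_le_dist_right a b c)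
  obtain rfl := hT.isZeroHyperbolic.eq_of_mem_treeSegment_of_dist_eq hz hw (hdz.trans hdw.symm)
    hdz.le
  exact ⟨z, ⟨hz, hw⟩, hdz⟩

end MetricTree

section Action

variable {G : Type*} [Group G] {T : Type*} [MetricSpace T] {σ : T → G → T}

namespace IsIsomRightAction

theorem act_one (hσ : IsIsomRightAction σ) (p : T) : σ p 1 = p := hσ.1 p

theorem act_mul (hσ : IsIsomRightAction σ) (p : T) (g h : G) : σ p (g * h) = σ (σ p g) h :=
  hσ.2.1 p g h

theorem dist_act (hσ : IsIsomRightAction σ) (u : G) (p q : T) :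
    dist (σ p u) (σ q u) = dist p q :=
  (hσ.2.2 u).dist_eq p q

theorem dist_act_act (hσ : IsIsomRightAction σ) (p : T) (α β : G) :
    dist (σ p α) (σ p β) = dist p (σ p (β * α⁻¹)) := by
  rw [← hσ.dist_act α⁻¹, ← hσ.act_mul, ← hσ.act_mul, mul_inv_cancel, hσ.act_one]

theorem dist_act_inv (hσ : IsIsomRightAction σ) (p : T) (u : G) :
    dist p (σ p u⁻¹) = dist p (σ p u) := by
  have := hσ.dist_act_act p u⁻¹ 1
  rwa [hσ.act_one, one_mul, inv_inv, dist_comm] at this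

theorem dist_act_pow_add (hσ : IsIsomRightAction σ) (p : T) (u : G) (m n : ℕ) :
    dist (σ p (u ^ m)) (σ p (u ^ (m + n))) = dist p (σ p (u ^ n)) := by
  rw [hσ.dist_act_act, add_comm, pow_add, mul_inv_cancel_right]

theorem dist_act_pow_le (hσ : IsIsomRightAction σ) (p : T) (u : G) (n : ℕ) :
    dist p (σ p (u ^ n)) ≤ n * dist p (σ p u) := by
  induction n with
  | zero => simp [hσ.act_one]
  | succ n ih =>
    have := hσ.dist_act_pow_add p u n 1
    rw [pow_one] at this
    push_cast
    linarith [dist_triangle p (σ p (u ^ n)) (σ p (u ^ (n + 1)))]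

theorem dist_act_mul_inv (hσ : IsIsomRightAction σ) (p : T) (u v : G) :
    dist p (σ p (u * v⁻¹)) =
      dist p (σ p u) + dist p (σ p v) - 2 * gromovProduct p (σ p u) (σ p v) := by
  rw [← hσ.dist_act_act, gromovProduct, dist_comm (σ p v)]
  ring

theorem act_mem_treeSegment (hσ : IsIsomRightAction σ) (u : G) {a b z : T}
    (h : z ∈ treeSegment a b) : σ z u ∈ treeSegment (σ a u) (σ b u) := by
  simpa only [treeSegment, Set.mem_ofPred_eq, hσ.dist_act] using h

theorem transLen_inv (hσ : IsIsomRightAction σ) (u : G) : transLen σ u⁻¹ = transLen σ u :=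
  iInf_congr fun p => hσ.dist_act_inv p u

theorem charSet_inv (hσ : IsIsomRightAction σ) (u : G) : charSet σ u⁻¹ = charSet σ u := by
  ext p
  simp only [charSet, Set.mem_ofPred_eq, hσ.dist_act_inv, hσ.transLen_inv]

theorem act_pow_mem_charSet (hσ : IsIsomRightAction σ) {g : G} {z : T}
    (hz : z ∈ charSet σ g) (n : ℕ) : σ z (g ^ n) ∈ charSet σ g := by
  change dist _ _ = _
  rw [← hσ.act_mul, hσ.dist_act_act, ← pow_succ, pow_succ', mul_inv_cancel_right]
  exact hz

theorem act_pow_inv_mem_charSet (hσ : IsIsomRightAction σ) {g : G} {z : T}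
    (hz : z ∈ charSet σ g) (n : ℕ) : σ z (g ^ n)⁻¹ ∈ charSet σ g := by
  rw [← inv_pow, ← hσ.charSet_inv]
  exact hσ.act_pow_mem_charSet (by rwa [hσ.charSet_inv]) n

end IsIsomRightAction

theorem transLen_nonneg (σ : T → G → T) (u : G) : 0 ≤ transLen σ u :=
  Real.iInf_nonneg fun _ => dist_nonneg

theorem transLen_le_dist (p : T) (u : G) : transLen σ u ≤ dist p (σ p u) :=
  ciInf_le ⟨0, by rintro _ ⟨q, rfl⟩; exact dist_nonneg⟩ p

theorem IsIsomRightAction.transLen_mul_inv_le (hσ : IsIsomRightAction σ) (p : T) (u v : G) :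
    transLen σ (u * v⁻¹) ≤
      dist p (σ p u) + dist p (σ p v) - 2 * gromovProduct p (σ p u) (σ p v) :=
  hσ.dist_act_mul_inv p u v ▸ transLen_le_dist p _

namespace IsZeroHyperbolic

theorem dist_act_pow_succ_ge (hT : IsZeroHyperbolic T) (hσ : IsIsomRightAction σ) (p : T)
    (u : G) (hlt : dist p (σ p u) < dist p (σ p (u ^ 2))) (n : ℕ) :
    dist p (σ p u) + n * (dist p (σ p (u ^ 2)) - dist p (σ p u)) ≤ dist p (σ p (u ^ (n + 1))) := by
  set t := dist p (σ p u)
  set c := dist p (σ p (u ^ 2))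
  have hstep : ∀ k : ℕ, t = dist (σ p (u ^ k)) (σ p (u ^ (k + 1))) := fun k => by
    rw [hσ.dist_act_pow_add, pow_one]
  have hgrow : ∀ k : ℕ, dist p (σ p (u ^ (k + 1))) + (c - t) ≤ dist p (σ p (u ^ (k + 2))) := by
    intro k
    induction k with
    | zero => simp [t, c, pow_one]
    | succ k ih =>
      have h2 : c = dist (σ p (u ^ (k + 1))) (σ p (u ^ (k + 1 + 2))) :=
        (hσ.dist_act_pow_add p u (k + 1) 2).symm
      rcases le_max_iff.mp (hT (σ p (u ^ (k + 1))) (σ p (u ^ (k + 1 + 2))) p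
        (σ p (u ^ (k + 1 + 1)))) with h | h
      · linarith [hstep (k + 1 + 1), dist_comm p (σ p (u ^ (k + 1))),
          dist_comm (σ p (u ^ (k + 1 + 1))) (σ p (u ^ (k + 1 + 2)))]
      · linarith [hstep (k + 1), dist_comm p (σ p (u ^ (k + 1 + 2)))]
  induction n with
  | zero => simp [t]
  | succ n ih =>
    push_cast
    linarith [hgrow n]

theorem sub_le_transLen (hT : IsZeroHyperbolic T) (hσ : IsIsomRightAction σ) (p : T) (u : G) :
    dist p (σ p (u ^ 2)) - dist p (σ p u) ≤ transLen σ u := by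
  rcases le_or_gt (dist p (σ p (u ^ 2))) (dist p (σ p u)) with hle | hlt
  · linarith [transLen_nonneg σ u]
  have : Nonempty T := ⟨p⟩
  refine le_ciInf fun q => ?_
  by_contra! hq
  -- the orbit of `p` escapes at rate `d(p, pu²) - d(p, pu)`, that of `q` at rate `≤ d(q, qu)`
  set μ := dist p (σ p (u ^ 2)) - dist p (σ p u) - dist q (σ q u)
  have hμ : 0 < μ := by linarith
  obtain ⟨n, hn⟩ := exists_nat_gt ((2 * dist p q + dist q (σ q u)) / μ)
  rw [div_lt_iff₀ hμ] at hn
  have hp := hT.dist_act_pow_succ_ge hσ p u hlt n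
  have hq := hσ.dist_act_pow_le q u (n + 1)
  have hpq := dist_triangle4 p q (σ q (u ^ (n + 1))) (σ p (u ^ (n + 1)))
  rw [hσ.dist_act, dist_comm q p] at hpq
  push_cast at hq
  nlinarith [dist_nonneg (x := p) (y := σ p u)]

theorem transLen_eq_of_dist_sq (hT : IsZeroHyperbolic T) (hσ : IsIsomRightAction σ) {p : T}
    {u : G} (h : dist p (σ p (u ^ 2)) = 2 * dist p (σ p u)) :
    transLen σ u = dist p (σ p u) := by
  have := hT.sub_le_transLen hσ p u
  linarith [transLen_le_dist (σ := σ) p u]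

theorem dist_act_pow_of_dist_sq (hT : IsZeroHyperbolic T) (hσ : IsIsomRightAction σ) {p : T}
    {u : G} (h : dist p (σ p (u ^ 2)) = 2 * dist p (σ p u)) (n : ℕ) :
    dist p (σ p (u ^ n)) = n * dist p (σ p u) := by
  refine le_antisymm (hσ.dist_act_pow_le p u n) ?_
  rcases n with _ | n
  · simp
  rcases (dist_nonneg (x := p) (y := σ p u)).eq_or_lt with h0 | hpos
  · rw [← h0, mul_zero]
    exact dist_nonneg
  have := hT.dist_act_pow_succ_ge hσ p u (by linarith) n
  rw [h] at this
  push_cast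
  linarith

theorem le_transLen_mul_inv (hT : IsZeroHyperbolic T) (hσ : IsIsomRightAction σ) (p : T)
    (u v : G)
    (hu : gromovProduct p (σ p u) (σ p v) + gromovProduct p (σ p u⁻¹) (σ p v⁻¹) < dist p (σ p u))
    (hv : gromovProduct p (σ p u) (σ p v) + gromovProduct p (σ p u⁻¹) (σ p v⁻¹) < dist p (σ p v)) :
    dist p (σ p u) + dist p (σ p v) - 2 * gromovProduct p (σ p u) (σ p v)
      - 2 * gromovProduct p (σ p u⁻¹) (σ p v⁻¹) ≤ transLen σ (u * v⁻¹) := by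
  have hk := hσ.dist_act_mul_inv p u v
  set k := u * v⁻¹
  have hkv : gromovProduct p (σ p k) (σ p v⁻¹) =
      dist p (σ p v) - gromovProduct p (σ p u) (σ p v) := by
    rw [gromovProduct, dist_comm (σ p k), hσ.dist_act_act, inv_inv, inv_mul_cancel_right, hk,
      hσ.dist_act_inv]
    ring
  have hku : gromovProduct p (σ p k⁻¹) (σ p u⁻¹) =
      dist p (σ p u) - gromovProduct p (σ p u) (σ p v) := by
    have : k⁻¹ * u⁻¹⁻¹ = v := by simp [k]
    rw [gromovProduct, dist_comm (σ p k⁻¹), hσ.dist_act_act, this, hσ.dist_act_inv, hk,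
      hσ.dist_act_inv]
    ring
  have h1 : gromovProduct p (σ p k) (σ p u⁻¹) ≤ gromovProduct p (σ p u⁻¹) (σ p v⁻¹) := by
    rw [gromovProduct_comm]
    exact hT.gromovProduct_le_of_lt (by rw [hkv]; linarith)
  have h2 : gromovProduct p (σ p k) (σ p k⁻¹) ≤ gromovProduct p (σ p u⁻¹) (σ p v⁻¹) :=
    (hT.gromovProduct_le_of_lt (h1.trans_lt (by rw [hku]; linarith))).trans h1
  have hsq : dist p (σ p (k ^ 2)) = dist (σ p k⁻¹) (σ p k) := by
    rw [hσ.dist_act_act, inv_inv, pow_two]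
  have := hT.sub_le_transLen hσ p k
  rw [hsq] at this
  rw [gromovProduct, hσ.dist_act_inv] at h2
  linarith [dist_comm (σ p k) (σ p k⁻¹)]

end IsZeroHyperbolic

namespace IsRealTree

theorem dist_act_sq_of_mem_charSet (hT : IsRealTree T) (hσ : IsIsomRightAction σ) {g : G}
    {p : T} (hp : p ∈ charSet σ g) : dist p (σ p (g ^ 2)) = 2 * transLen σ g := by
  set L := transLen σ g
  have hpg : dist p (σ p g) = L := hp
  have hsq : σ p (g ^ 2) = σ (σ p g) g := by rw [pow_two, hσ.act_mul]
  have hgg : dist (σ p g) (σ p (g ^ 2)) = L := by rw [hsq, hσ.dist_act, hpg]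
  refine le_antisymm (by linarith [dist_triangle p (σ p g) (σ p (g ^ 2))]) ?_
  by_contra! hlt
  -- a point `m ∈ [p, pg]` near `p` would be moved by `g` onto `[p, pg]`, by less than `L`
  set δ := min (gromovProduct (σ p g) p (σ p (g ^ 2))) (L / 2)
  have hδ : 0 < δ := lt_min (by rw [gromovProduct, dist_comm, hpg, hgg]; linarith)
    (by linarith [dist_nonneg (x := p) (y := σ p (g ^ 2))])
  have hδL : δ ≤ L / 2 := min_le_right _ _
  obtain ⟨m, hm, hpm⟩ := hT.exists_mem_treeSegment p (σ p g) hδ.le (by linarith)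
  obtain ⟨z, hz, hgz⟩ := hT.exists_mem_treeSegment (σ p g) p hδ.le
    (by rw [dist_comm, hpg]; linarith)
  have hmg : σ m g ∈ treeSegment (σ p g) (σ p (g ^ 2)) := by
    rw [hsq]; exact hσ.act_mem_treeSegment g hm
  have hzm : z = σ m g := hT.isZeroHyperbolic.eq_of_mem_treeSegment_of_dist_eq hz hmg
    (by rw [hgz, hσ.dist_act, hpm]) (hgz ▸ min_le_left _ _)
  have hpz : dist p z = L - δ := by
    have : dist (σ p g) z + dist z p = dist (σ p g) p := hz
    rw [dist_comm (σ p g) p, hpg, hgz, dist_comm] at this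
    linarith
  have hmz := hT.isZeroHyperbolic.dist_eq_abs_sub_of_mem_treeSegment hm
    (mem_treeSegment_comm.mp hz)
  rw [hpm, hpz, abs_of_nonpos (by linarith), hzm] at hmz
  linarith [transLen_le_dist (σ := σ) m g]

theorem dist_act_pow_of_mem_charSet (hT : IsRealTree T) (hσ : IsIsomRightAction σ) {g : G}
    {p : T} (hp : p ∈ charSet σ g) (n : ℕ) : dist p (σ p (g ^ n)) = n * transLen σ g := by
  have hpg : dist p (σ p g) = transLen σ g := hp
  rw [hT.isZeroHyperbolic.dist_act_pow_of_dist_sq hσ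
    (by rw [hT.dist_act_sq_of_mem_charSet hσ hp, hpg]), hpg]

theorem transLen_pow_of_mem_charSet (hT : IsRealTree T) (hσ : IsIsomRightAction σ) {g : G}
    {p : T} (hp : p ∈ charSet σ g) (n : ℕ) : transLen σ (g ^ n) = n * transLen σ g := by
  have h := hT.dist_act_pow_of_mem_charSet hσ hp
  rw [hT.isZeroHyperbolic.transLen_eq_of_dist_sq hσ (p := p), h]
  rw [← pow_mul, h, h]
  push_cast
  ring

theorem dist_act_pow_inv_act_pow (hT : IsRealTree T) (hσ : IsIsomRightAction σ) {g : G}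
    {p : T} (hp : p ∈ charSet σ g) (n : ℕ) :
    dist (σ p (g ^ n)⁻¹) (σ p (g ^ n)) = 2 * (n * transLen σ g) := by
  rw [hσ.dist_act_act, inv_inv, ← pow_add, hT.dist_act_pow_of_mem_charSet hσ hp]
  push_cast
  ring

theorem mem_charSet_of_mem_treeSegment (hT : IsRealTree T) (hσ : IsIsomRightAction σ) {g : G}
    {z m : T} (hz : z ∈ charSet σ g) {n : ℕ} (hm : m ∈ treeSegment z (σ z (g ^ n))) :
    m ∈ charSet σ g := by
  set L := transLen σ g
  set e := dist z m
  -- both `m` and `mg` lie on the segment `[z g⁻¹, z g^(n+1)]` of the axis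
  set A := σ z g⁻¹
  set E := σ z (g ^ n)
  set E' := σ z (g ^ (n + 1))
  have hE' : E' = σ E g := by simp only [E', E, pow_succ, hσ.act_mul]
  have hmE : dist m E = n * L - e := by
    have : e + dist m E = dist z E := hm
    rw [hT.dist_act_pow_of_mem_charSet hσ hz] at this
    linarith
  have hAz : dist A z = L := by rw [dist_comm, hσ.dist_act_inv]; exact hz
  have hEE' : dist E E' = L := hE' ▸ hσ.act_pow_mem_charSet hz n
  have hAE' : dist A E' = (n + 2) * L := by
    rw [hσ.dist_act_act, inv_inv, ← pow_succ, hT.dist_act_pow_of_mem_charSet hσ hz]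
    push_cast
    ring
  have hAzg : dist A (σ z g) = 2 * L := by
    have := hT.dist_act_pow_inv_act_pow hσ hz 1
    rwa [pow_one, Nat.cast_one, one_mul] at this
  have hmgE' : dist (σ m g) E' = n * L - e := by rw [hE', hσ.dist_act, hmE]
  have hzmg : dist (σ z g) (σ m g) = e := hσ.dist_act g z m
  have hAm : dist A m = L + e := by
    linarith [dist_triangle A z m, dist_triangle A m E', dist_triangle m E E']
  have hAmg : dist A (σ m g) = 2 * L + e := by
    linarith [dist_triangle A (σ z g) (σ m g), dist_triangle A (σ m g) E']
  have hmseg : m ∈ treeSegment A E' := by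
    change dist A m + dist m E' = dist A E'
    linarith [dist_triangle m E E', dist_triangle A m E']
  have hmgseg : σ m g ∈ treeSegment A E' := by
    change dist A (σ m g) + dist (σ m g) E' = dist A E'
    linarith
  have := hT.isZeroHyperbolic.dist_eq_abs_sub_of_mem_treeSegment hmseg hmgseg
  rw [hAm, hAmg, abs_of_nonpos (by linarith [transLen_nonneg σ g])] at this
  change dist m (σ m g) = L
  linarith

theorem mem_treeSegment_of_gromovProduct_eq_zero (hT : IsRealTree T) (hσ : IsIsomRightAction σ)
    {g : G} {x z : T} (hx : x ∈ charSet σ g) (hz : z ∈ charSet σ g) {n : ℕ}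
    (hn : dist x z ≤ n * transLen σ g) (h0 : gromovProduct z (σ z (g ^ n)) x = 0) :
    z ∈ treeSegment (σ x (g ^ n)⁻¹) (σ x (g ^ n)) := by
  set L := transLen σ g
  set t := dist x z
  set X := σ x (g ^ n)
  set Z := σ z (g ^ n)
  have hzZ : dist z Z = n * L := hT.dist_act_pow_of_mem_charSet hσ hz n
  have hxX : dist x X = n * L := hT.dist_act_pow_of_mem_charSet hσ hx n
  have hXZ : dist X Z = t := hσ.dist_act _ x z
  have hxZ : dist x Z = t + n * L := by
    rw [gromovProduct] at h0
    linarith [dist_comm z x, dist_comm Z x]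
  have hzX : dist z X ≤ n * L - t := by
    have h := hT.isZeroHyperbolic.min_gromovProduct_le x z Z X
    have e1 : gromovProduct x z Z = t := by rw [gromovProduct, hxZ, hzZ]; ring
    have e2 : gromovProduct x Z X = n * L := by
      rw [gromovProduct, hxZ, hxX, dist_comm, hXZ]; ring
    rw [e1, e2, min_eq_left hn, gromovProduct, hxX] at h
    linarith
  change dist (σ x (g ^ n)⁻¹) z + dist z X = dist (σ x (g ^ n)⁻¹) X
  have hX'x : dist (σ x (g ^ n)⁻¹) x = n * L := by rw [dist_comm, hσ.dist_act_inv, hxX]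
  have := hT.dist_act_pow_inv_act_pow hσ hx n
  linarith [dist_triangle (σ x (g ^ n)⁻¹) x z, dist_triangle (σ x (g ^ n)⁻¹) z X]

theorem mem_treeSegment_of_mem_charSet (hT : IsRealTree T) (hσ : IsIsomRightAction σ) {g : G}
    {x z : T} (hx : x ∈ charSet σ g) (hz : z ∈ charSet σ g) {n : ℕ}
    (hn : dist x z ≤ n * transLen σ g) : z ∈ treeSegment (σ x (g ^ n)⁻¹) (σ x (g ^ n)) := by
  have h0 : gromovProduct z (σ z (g ^ n)) (σ z (g ^ n)⁻¹) = 0 := by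
    rw [gromovProduct, dist_comm (σ z (g ^ n)), hT.dist_act_pow_inv_act_pow hσ hz,
      hσ.dist_act_inv, hT.dist_act_pow_of_mem_charSet hσ hz]
    ring
  rcases min_le_iff.mp ((hT.isZeroHyperbolic.min_gromovProduct_le z (σ z (g ^ n)) x
    (σ z (g ^ n)⁻¹)).trans h0.le) with h | h
  · exact hT.mem_treeSegment_of_gromovProduct_eq_zero hσ hx hz hn
      (le_antisymm h (gromovProduct_nonneg _ _ _))
  · have := hT.mem_treeSegment_of_gromovProduct_eq_zero hσ (g := g⁻¹) (x := x) (z := z) (n := n)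
      (by rwa [hσ.charSet_inv]) (by rwa [hσ.charSet_inv]) (by rwa [hσ.transLen_inv])
      (by rw [inv_pow, gromovProduct_comm]; exact le_antisymm h (gromovProduct_nonneg _ _ _))
    rw [inv_pow, inv_inv] at this
    exact mem_treeSegment_comm.mp this

end IsRealTree

/-- The signed position of `z` on the axis of `g`, with origin `x`, read off from the far point
`x g⁻ᴺ` of the axis; by `IsRealTree.dist_act_pow_inv_eq_axisCoord` any `N` with
`N ℓ(g) ≥ d(x, z)` gives the same value. -/
noncomputable def axisCoord (σ : T → G → T) (g : G) (x z : T) : ℝ :=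
  dist (σ x (g ^ ⌈dist x z / transLen σ g⌉₊)⁻¹) z - ⌈dist x z / transLen σ g⌉₊ * transLen σ g

namespace IsRealTree

theorem dist_act_pow_inv_eq_axisCoord (hT : IsRealTree T) (hσ : IsIsomRightAction σ) {g : G}
    (hg : 0 < transLen σ g) {x z : T} (hx : x ∈ charSet σ g) (hz : z ∈ charSet σ g) {n : ℕ}
    (hn : dist x z ≤ n * transLen σ g) :
    dist (σ x (g ^ n)⁻¹) z = n * transLen σ g + axisCoord σ g x z := by
  set L := transLen σ g
  have key : ∀ m k : ℕ, k ≤ m → dist x z ≤ k * L →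
      dist (σ x (g ^ m)⁻¹) z - m * L = dist (σ x (g ^ k)⁻¹) z - k * L := by
    intro m k hkm hk
    have hkmL : (k : ℝ) * L ≤ m * L := by gcongr
    have hxAk : dist x (σ x (g ^ k)⁻¹) = k * L := by
      rw [hσ.dist_act_inv, hT.dist_act_pow_of_mem_charSet hσ hx]
    have hxAm : dist (σ x (g ^ m)⁻¹) x = m * L := by
      rw [dist_comm, hσ.dist_act_inv, hT.dist_act_pow_of_mem_charSet hσ hx]
    have hAmAk : dist (σ x (g ^ m)⁻¹) (σ x (g ^ k)⁻¹) = (m - k) * L := by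
      have : (g ^ k)⁻¹ * (g ^ m)⁻¹⁻¹ = g ^ (m - k) := by
        rw [inv_inv, inv_mul_eq_iff_eq_mul, ← pow_add, Nat.add_sub_cancel' hkm]
      rw [hσ.dist_act_act, this, hT.dist_act_pow_of_mem_charSet hσ hx, Nat.cast_sub hkm]
    -- `x g⁻ᵏ` and `z` both lie on `[x g⁻ᵐ, x gᵐ]`, the former closer to `x g⁻ᵐ`
    have h := hT.isZeroHyperbolic.dist_eq_abs_sub_of_mem_treeSegment
      (hT.mem_treeSegment_of_mem_charSet hσ hx (hσ.act_pow_inv_mem_charSet hx k)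
        (hxAk ▸ hkmL))
      (hT.mem_treeSegment_of_mem_charSet hσ hx hz (hk.trans hkmL))
    rw [hAmAk, abs_of_nonpos (by linarith [dist_triangle (σ x (g ^ m)⁻¹) z x, dist_comm z x])] at h
    linarith
  have hN : dist x z ≤ ⌈dist x z / L⌉₊ * L := (div_le_iff₀ hg).mp (Nat.le_ceil _)
  rw [axisCoord]
  rcases le_total n ⌈dist x z / L⌉₊ with h | h
  · linarith [key _ _ h hn]
  · linarith [key _ _ h hN]

theorem dist_eq_abs_axisCoord_sub (hT : IsRealTree T) (hσ : IsIsomRightAction σ) {g : G}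
    (hg : 0 < transLen σ g) {x z w : T} (hx : x ∈ charSet σ g) (hz : z ∈ charSet σ g)
    (hw : w ∈ charSet σ g) : dist z w = |axisCoord σ g x z - axisCoord σ g x w| := by
  obtain ⟨n, hn⟩ := Archimedean.arch (dist x z + dist x w) hg
  rw [nsmul_eq_mul] at hn
  have hzn : dist x z ≤ n * transLen σ g := by linarith [dist_nonneg (x := x) (y := w)]
  have hwn : dist x w ≤ n * transLen σ g := by linarith [dist_nonneg (x := x) (y := z)]
  rw [hT.isZeroHyperbolic.dist_eq_abs_sub_of_mem_treeSegment
    (hT.mem_treeSegment_of_mem_charSet hσ hx hz hzn)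
    (hT.mem_treeSegment_of_mem_charSet hσ hx hw hwn),
    hT.dist_act_pow_inv_eq_axisCoord hσ hg hx hz hzn,
    hT.dist_act_pow_inv_eq_axisCoord hσ hg hx hw hwn, add_sub_add_left_eq_sub]

theorem axisCoord_self (hT : IsRealTree T) (hσ : IsIsomRightAction σ) {g : G}
    (hg : 0 < transLen σ g) {x : T} (hx : x ∈ charSet σ g) : axisCoord σ g x x = 0 := by
  have := hT.dist_act_pow_inv_eq_axisCoord hσ hg hx hx (n := 0) (by simp)
  simpa [hσ.act_one] using this.symm

theorem axisCoord_act_pow (hT : IsRealTree T) (hσ : IsIsomRightAction σ) {g : G}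
    (hg : 0 < transLen σ g) {x z : T} (hx : x ∈ charSet σ g) (hz : z ∈ charSet σ g) (a : ℕ) :
    axisCoord σ g x (σ z (g ^ a)) = axisCoord σ g x z + a * transLen σ g := by
  obtain ⟨n, hn⟩ := Archimedean.arch (dist x (σ z (g ^ a))) hg
  rw [nsmul_eq_mul] at hn
  have hn' : dist x z ≤ (n + a : ℕ) * transLen σ g := by
    push_cast
    linarith [dist_triangle x (σ z (g ^ a)) z, dist_comm z (σ z (g ^ a)),
      hT.dist_act_pow_of_mem_charSet hσ hz a]
  have h1 := hT.dist_act_pow_inv_eq_axisCoord hσ hg hx (hσ.act_pow_mem_charSet hz a) hn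
  have h2 := hT.dist_act_pow_inv_eq_axisCoord hσ hg hx hz hn'
  have h3 : dist (σ x (g ^ n)⁻¹) (σ z (g ^ a)) = dist (σ x (g ^ (n + a))⁻¹) z := by
    rw [← hσ.dist_act (g ^ a)⁻¹, ← hσ.act_mul, ← hσ.act_mul, mul_inv_cancel, hσ.act_one,
      ← mul_inv_rev, ← pow_add, add_comm a n]
  push_cast at h2
  linarith

theorem axisCoord_act_pow_inv (hT : IsRealTree T) (hσ : IsIsomRightAction σ) {g : G}
    (hg : 0 < transLen σ g) {x z : T} (hx : x ∈ charSet σ g) (hz : z ∈ charSet σ g) (a : ℕ) :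
    axisCoord σ g x (σ z (g ^ a)⁻¹) = axisCoord σ g x z - a * transLen σ g := by
  have := hT.axisCoord_act_pow hσ hg hx (hσ.act_pow_inv_mem_charSet hz a) a
  rw [← hσ.act_mul, inv_mul_cancel, hσ.act_one] at this
  linarith

theorem mem_treeSegment_act_pow_of_axisCoord_le (hT : IsRealTree T) (hσ : IsIsomRightAction σ)
    {g : G} (hg : 0 < transLen σ g) {x z w : T} (hx : x ∈ charSet σ g) (hz : z ∈ charSet σ g)
    (hw : w ∈ charSet σ g) (hle : axisCoord σ g x z ≤ axisCoord σ g x w) {a : ℕ}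
    (ha : dist z w ≤ a * transLen σ g) : w ∈ treeSegment z (σ z (g ^ a)) := by
  have hzw := hT.dist_eq_abs_axisCoord_sub hσ hg hx hz hw
  rw [abs_of_nonpos (by linarith)] at hzw
  have hwa := hT.dist_eq_abs_axisCoord_sub hσ hg hx hw (hσ.act_pow_mem_charSet hz a)
  rw [hT.axisCoord_act_pow hσ hg hx hz, abs_of_nonpos (by linarith)] at hwa
  change dist z w + dist w (σ z (g ^ a)) = dist z (σ z (g ^ a))
  rw [hT.dist_act_pow_of_mem_charSet hσ hz]
  linarith

theorem abs_axisCoord (hT : IsRealTree T) (hσ : IsIsomRightAction σ) {g : G}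
    (hg : 0 < transLen σ g) {x z : T} (hx : x ∈ charSet σ g) (hz : z ∈ charSet σ g) :
    |axisCoord σ g x z| = dist x z := by
  rw [hT.dist_eq_abs_axisCoord_sub hσ hg hx hx hz, hT.axisCoord_self hσ hg hx, zero_sub, abs_neg]

theorem gromovProduct_pos_iff (hT : IsRealTree T) (hσ : IsIsomRightAction σ) {g : G}
    (hg : 0 < transLen σ g) {x y z : T} (hx : x ∈ charSet σ g) (hy : y ∈ charSet σ g)
    (hz : z ∈ charSet σ g) :
    0 < gromovProduct x y z ↔ 0 < axisCoord σ g x y * axisCoord σ g x z := by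
  rw [gromovProduct, ← hT.abs_axisCoord hσ hg hx hy, ← hT.abs_axisCoord hσ hg hx hz,
    hT.dist_eq_abs_axisCoord_sub hσ hg hx hy hz, ← abs_sub_lt_abs_add_abs_iff]
  constructor <;> intro h <;> linarith

theorem gromovProduct_act_pos_iff (hT : IsRealTree T) (hσ : IsIsomRightAction σ) {g : G}
    (hg : 0 < transLen σ g) {x z : T} (hx : x ∈ charSet σ g) (hz : z ∈ charSet σ g) :
    0 < gromovProduct x (σ x g) z ↔ 0 < axisCoord σ g x z := by
  have hc := hT.axisCoord_act_pow hσ hg hx hx 1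
  rw [pow_one, hT.axisCoord_self hσ hg hx] at hc
  rw [hT.gromovProduct_pos_iff hσ hg hx (by simpa using hσ.act_pow_mem_charSet hx 1) hz, hc,
    Nat.cast_one, one_mul, zero_add]
  exact mul_pos_iff_of_pos_left hg

theorem gromovProduct_act_inv_pos_iff (hT : IsRealTree T) (hσ : IsIsomRightAction σ) {g : G}
    (hg : 0 < transLen σ g) {x z : T} (hx : x ∈ charSet σ g) (hz : z ∈ charSet σ g) :
    0 < gromovProduct x (σ x g⁻¹) z ↔ axisCoord σ g x z < 0 := by
  have hc := hT.axisCoord_act_pow_inv hσ hg hx hx 1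
  rw [pow_one, hT.axisCoord_self hσ hg hx] at hc
  rw [hT.gromovProduct_pos_iff hσ hg hx (by simpa using hσ.act_pow_inv_mem_charSet hx 1) hz, hc,
    Nat.cast_one, one_mul, zero_sub, neg_mul, neg_pos]
  constructor <;> intro h <;> nlinarith

theorem axisCoord_eq_of_transLen_mul_inv_lt (hT : IsRealTree T) (hσ : IsIsomRightAction σ)
    {g h : G} (hg : 0 < transLen σ g) (hh : 0 < transLen σ h) {x z : T}
    (hxg : x ∈ charSet σ g) (hxh : x ∈ charSet σ h)
    (hor : transLen σ (g * h⁻¹) < transLen σ (g * h)) (hzg : z ∈ charSet σ g)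
    (hzh : z ∈ charSet σ h) : axisCoord σ h x z = axisCoord σ g x z := by
  by_contra hne
  set s := axisCoord σ g x z
  have habs : |axisCoord σ h x z| = |s| := by
    rw [hT.abs_axisCoord hσ hg hxg hzg, hT.abs_axisCoord hσ hh hxh hzh]
  have hopp : axisCoord σ h x z = -s := (abs_eq_abs.mp habs).resolve_left hne
  have hs : s ≠ 0 := fun h0 => hne (by rw [hopp, h0, neg_zero])
  -- opposite orientations make the translations of `x` by `g` and `h⁻¹` coherent
  have hΔ : gromovProduct x (σ x g) (σ x h) = 0 :=
    hT.isZeroHyperbolic.gromovProduct_eq_zero_of_pos_iff hs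
      (hT.gromovProduct_act_pos_iff hσ hg hxg hzg)
      (by rw [hT.gromovProduct_act_pos_iff hσ hh hxh hzh, hopp, neg_pos])
  have he : gromovProduct x (σ x g⁻¹) (σ x h⁻¹) = 0 := by
    rw [gromovProduct_comm]
    exact hT.isZeroHyperbolic.gromovProduct_eq_zero_of_pos_iff hs
      (by rw [hT.gromovProduct_act_inv_pos_iff hσ hh hxh hzh, hopp, neg_lt_zero])
      (hT.gromovProduct_act_inv_pos_iff hσ hg hxg hzg)
  have hxg' : dist x (σ x g) = transLen σ g := hxg
  have hxh' : dist x (σ x h) = transLen σ h := hxh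
  have hlow := hT.isZeroHyperbolic.le_transLen_mul_inv hσ x g h
    (by rw [hΔ, he, hxg']; linarith) (by rw [hΔ, he, hxh']; linarith)
  have hup : transLen σ (g * h) ≤ transLen σ g + transLen σ h := by
    refine (transLen_le_dist x (g * h)).trans ?_
    rw [hσ.act_mul, ← hxg', ← hxh', ← hσ.dist_act h x (σ x g)]
    linarith [dist_triangle x (σ x h) (σ (σ x g) h)]
  rw [hΔ, he, hxg', hxh'] at hlow
  linarith

theorem exists_forward_pair (hT : IsRealTree T) (hσ : IsIsomRightAction σ) {g h : G}
    (hg : 0 < transLen σ g) (hh : 0 < transLen σ h)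
    (htwo : ∃ x ∈ charSet σ g ∩ charSet σ h, ∃ y ∈ charSet σ g ∩ charSet σ h, x ≠ y)
    (hor : transLen σ (g * h⁻¹) < transLen σ (g * h)) :
    ∃ P ∈ charSet σ g ∩ charSet σ h, ∃ w ∈ charSet σ g ∩ charSet σ h, P ≠ w ∧
      (∀ a : ℕ, dist P w ≤ a * transLen σ g → w ∈ treeSegment P (σ P (g ^ a))) ∧
      (∀ b : ℕ, dist P w ≤ b * transLen σ h → w ∈ treeSegment P (σ P (h ^ b))) := by
  obtain ⟨x, hx, y, hy, hxy⟩ := htwo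
  obtain ⟨P, hP, w, hw, hPw, hle⟩ : ∃ P ∈ charSet σ g ∩ charSet σ h,
      ∃ w ∈ charSet σ g ∩ charSet σ h, P ≠ w ∧ axisCoord σ g x P ≤ axisCoord σ g x w := by
    rcases le_total (axisCoord σ g x x) (axisCoord σ g x y) with hle | hle
    exacts [⟨x, hx, y, hy, hxy, hle⟩, ⟨y, hy, x, hx, hxy.symm, hle⟩]
  have hcoord : ∀ z ∈ charSet σ g ∩ charSet σ h, axisCoord σ h x z = axisCoord σ g x z :=
    fun z hz => hT.axisCoord_eq_of_transLen_mul_inv_lt hσ hg hh hx.1 hx.2 hor hz.1 hz.2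
  exact ⟨P, hP, w, hw, hPw,
    fun _ ha => hT.mem_treeSegment_act_pow_of_axisCoord_le hσ hg hx.1 hP.1 hw.1 hle ha,
    fun _ hb => hT.mem_treeSegment_act_pow_of_axisCoord_le hσ hh hx.2 hP.2 hw.2
      (by rwa [hcoord P hP, hcoord w hw]) hb⟩

theorem gromovProduct_add_gromovProduct_le_diam (hT : IsRealTree T) (hσ : IsIsomRightAction σ)
    {g h : G} (hbdd : Bornology.IsBounded (charSet σ g ∩ charSet σ h)) {P : T}
    (hP : P ∈ charSet σ g ∩ charSet σ h) (a b : ℕ) :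
    gromovProduct P (σ P (g ^ a)) (σ P (h ^ b)) + gromovProduct P (σ P (g ^ a)⁻¹) (σ P (h ^ b)⁻¹)
      ≤ Metric.diam (charSet σ g ∩ charSet σ h) := by
  obtain ⟨m', ⟨hm'g, hm'h⟩, hPm'⟩ := hT.exists_mem_treeSegment_inter P (σ P (g ^ a)) (σ P (h ^ b))
  obtain ⟨m, ⟨hmg, hmh⟩, hPm⟩ :=
    hT.exists_mem_treeSegment_inter P (σ P (g ^ a)⁻¹) (σ P (h ^ b)⁻¹)
  have hmem_inv : ∀ {u : G} {n : ℕ} {q : T}, P ∈ charSet σ u →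
      q ∈ treeSegment P (σ P (u ^ n)⁻¹) → q ∈ charSet σ u := fun hPu hq => by
    rw [← hσ.charSet_inv] at hPu ⊢
    exact hT.mem_charSet_of_mem_treeSegment hσ hPu (by rwa [inv_pow])
  have hm'S : m' ∈ charSet σ g ∩ charSet σ h :=
    ⟨hT.mem_charSet_of_mem_treeSegment hσ hP.1 hm'g, hT.mem_charSet_of_mem_treeSegment hσ hP.2 hm'h⟩
  have hmS : m ∈ charSet σ g ∩ charSet σ h := ⟨hmem_inv hP.1 hmg, hmem_inv hP.2 hmh⟩
  have hPseg : P ∈ treeSegment (σ P (g ^ a)⁻¹) (σ P (g ^ a)) :=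
    hT.mem_treeSegment_of_mem_charSet hσ hP.1 hP.1 (by simp [mul_nonneg, transLen_nonneg])
  calc _ = dist m P + dist P m' := by rw [dist_comm, hPm, hPm', add_comm]
    _ = dist m m' := (dist_eq_add_of_mem_treeSegment hPseg hmg hm'g).symm
    _ ≤ _ := Metric.dist_le_diam_of_mem hbdd hmS hm'S

end IsRealTree

end Action

/-- if the axes of hyperbolic `g` and `h` intersect in a bounded
set with at least two points, and the orientations agree (`ℓ(gh) > ℓ(gh⁻¹)`),
then `(g^a, h^b)` is a good pair for all sufficiently large `a, b`. -/
theorem exists_good_pair_powers {G : Type*} [Group G] {T : Type*} [MetricSpace T]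
    (σ : T → G → T) (hT : IsRealTree T) (hσ : IsIsomRightAction σ) (g h : G)
    (hg : 0 < transLen σ g) (hh : 0 < transLen σ h)
    (hbdd : Bornology.IsBounded (charSet σ g ∩ charSet σ h))
    (htwo : ∃ x ∈ charSet σ g ∩ charSet σ h,
      ∃ y ∈ charSet σ g ∩ charSet σ h, x ≠ y)
    (hor : transLen σ (g * h⁻¹) < transLen σ (g * h)) :
    ∃ A B : ℕ, 0 < A ∧ 0 < B ∧ ∀ a ≥ A, ∀ b ≥ B,
      GoodPair (transLen σ) (g ^ a) (h ^ b) := by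
  obtain ⟨P, hP, w, hw, hPw, hwg, hwh⟩ := hT.exists_forward_pair hσ hg hh htwo hor
  set D := Metric.diam (charSet σ g ∩ charSet σ h)
  have hPwD : dist P w ≤ D := Metric.dist_le_diam_of_mem hbdd hP hw
  refine ⟨⌈D / transLen σ g⌉₊ + 1, ⌈D / transLen σ h⌉₊ + 1, by omega, by omega,
    fun a ha b hb => ?_⟩
  have haL : D < a * transLen σ g := (div_lt_iff₀ hg).mp (Nat.lt_of_ceil_lt ha)
  have hbM : D < b * transLen σ h := (div_lt_iff₀ hh).mp (Nat.lt_of_ceil_lt hb)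
  have hPa := hT.dist_act_pow_of_mem_charSet hσ hP.1 a
  have hPb := hT.dist_act_pow_of_mem_charSet hσ hP.2 b
  have hΔ := hT.isZeroHyperbolic.le_gromovProduct_of_mem_treeSegment
    (hwg a (by linarith)) (hwh b (by linarith))
  have hΔe := hT.gromovProduct_add_gromovProduct_le_diam hσ hbdd hP a b
  have he := gromovProduct_nonneg P (σ P (g ^ a)⁻¹) (σ P (h ^ b)⁻¹)
  have hlow := hT.isZeroHyperbolic.le_transLen_mul_inv hσ P (g ^ a) (h ^ b)
    (by linarith) (by linarith)
  have hupp := hσ.transLen_mul_inv_le P (g ^ a) (h ^ b)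
  have hPw' := dist_pos.mpr hPw
  rw [GoodPair, hT.transLen_pow_of_mem_charSet hσ hP.1, hT.transLen_pow_of_mem_charSet hσ hP.2]
  exact ⟨by linarith, by linarith [lt_min haL hbM]⟩
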